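/- For every positive integer n, the polynomial T_n(z) = ∑_{r=0}^{n-1} c_n(r) z^r − n has degree exactly n − n/γ(n), where γ(n) is the square-free kernel of n; that is, c_n(r) = 0 for n − n/γ(n) < r ≤ n−1 and c_n(n − n/γ(n)) ≠ 0. -/

import Mathlib

open Polynomial Finset

/-- The Ramanujan sum `c_n(r) = ∑_{1 ≤ j ≤ n, gcd(j,n)=1} e^{2πijr/n}`. -/
noncomputable def ramanujanSum (n : ℕ) (r : ℤ) : ℂ :=
  ∑ j ∈ Finset.Icc 1 n, if Nat.gcd j n = 1 then
    Complex.exp (2 * (Real.pi : ℂ) * Complex.I * (j : ℂ) * (r : ℂ) / (n : ℂ)) else 0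

/-!
Möbius inversion of the coprimality condition, followed by the complete exponential sums
`∑_{k=1}^{m} e^{2πikr/m} = [m ∣ r] m`, gives `c_n(r) = ∑_{d ∣ n} μ(d) [n/d ∣ r] n/d`.
Only squarefree `d` contribute, and these divide `γ(n)`, so `n/γ(n)` divides every `n/d`
that occurs: hence `c_n(r) = 0` unless `n/γ(n) ∣ r`, which excludes `n - n/γ(n) < r < n`.
For `r ≡ n/γ(n) (mod n)` the only surviving divisor is `d = γ(n)`, so
`c_n(n - n/γ(n)) = μ(γ(n)) n/γ(n) ≠ 0`.
-/

open ArithmeticFunction UniqueFactorizationMonoid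
open scoped ArithmeticFunction.Moebius

lemma sum_Icc_pow_eq_ite {K : Type*} [Field K] [DecidableEq K] {w : K} {m : ℕ} (hw : w ^ m = 1) :
    ∑ k ∈ Icc 1 m, w ^ k = if w = 1 then (m : K) else 0 := by
  split_ifs with h1
  · simp [h1]
  · rw [← Ico_add_one_right_eq_Icc, sum_Ico_eq_sum_range, Nat.add_sub_cancel]
    simp_rw [pow_add, pow_one, ← mul_sum, geom_sum_eq h1, hw, sub_self, zero_div, mul_zero]

lemma sum_Icc_exp_eq_ite (m : ℕ) (r : ℤ) :
    ∑ k ∈ Icc 1 m, Complex.exp (2 * Real.pi * Complex.I * k * r / m) =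
      if (m : ℤ) ∣ r then (m : ℂ) else 0 := by
  rcases eq_or_ne m 0 with rfl | hm
  · simp
  have hζ := Complex.isPrimitiveRoot_exp m hm
  have hexp (k : ℕ) : Complex.exp (2 * Real.pi * Complex.I * k * r / m) =
      (Complex.exp (2 * Real.pi * Complex.I / m) ^ r) ^ k := by
    rw [← Complex.exp_int_mul, ← Complex.exp_nat_mul]
    ring_nf
  have hpow : (Complex.exp (2 * Real.pi * Complex.I / m) ^ r) ^ m = 1 := by
    rw [← zpow_natCast, ← zpow_mul, mul_comm r, zpow_mul, zpow_natCast, hζ.pow_eq_one, one_zpow]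
  simp_rw [hexp, sum_Icc_pow_eq_ite hpow, hζ.zpow_eq_one_iff_dvd]

lemma sum_Icc_filter_dvd {M : Type*} [AddCommMonoid M] (f : ℕ → M) (n d : ℕ) :
    ∑ j ∈ Icc 1 n with d ∣ j, f j = ∑ k ∈ Icc 1 (n / d), f (d * k) := by
  rcases eq_or_ne d 0 with rfl | hd
  · exact (sum_eq_zero fun j hj => by simp at hj; omega).trans (by simp)
  refine sum_nbij' (· / d) (d * ·) ?_ ?_ ?_ ?_ ?_ <;> intro j hj <;>
    simp only [mem_filter, mem_Icc, dvd_mul_right, and_true] at hj ⊢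
  · exact ⟨Nat.div_pos (Nat.le_of_dvd hj.1.1 hj.2) (by omega), Nat.div_le_div_right hj.1.2⟩
  · exact ⟨Nat.one_le_iff_ne_zero.2 (mul_ne_zero hd (by omega)),
      mul_comm j d ▸ Nat.mul_le_of_le_div d j n hj.2⟩
  · exact Nat.mul_div_cancel' hj.2
  · exact Nat.mul_div_cancel_left j (by omega)
  · rw [Nat.mul_div_cancel' hj.2]

lemma sum_divisors_moebius_eq_ite {R : Type*} [Ring R] (n : ℕ) :
    ∑ d ∈ n.divisors, (μ d : R) = if n = 1 then 1 else 0 := by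
  rw [← one_apply, ← coe_moebius_mul_coe_zeta, coe_mul_zeta_apply]
  simp only [intCoe_apply]

lemma sum_divisors_filter_dvd_moebius {R : Type*} [Ring R] {n : ℕ} (hn : n ≠ 0) (j : ℕ) :
    ∑ d ∈ n.divisors with d ∣ j, (μ d : R) = if j.gcd n = 1 then 1 else 0 := by
  have hdiv : {d ∈ n.divisors | d ∣ j} = (n.gcd j).divisors := by
    rw [← Nat.divisors_filter_dvd_of_dvd hn (Nat.gcd_dvd_left n j)]
    exact filter_congr fun d hd => by rw [Nat.dvd_gcd_iff]; simp [Nat.dvd_of_mem_divisors hd]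
  rw [hdiv, sum_divisors_moebius_eq_ite, Nat.gcd_comm]

theorem ramanujanSum_eq_sum_divisors (n : ℕ) (r : ℤ) :
    ramanujanSum n r = ∑ d ∈ n.divisors,
      (μ d : ℂ) * if ((n / d : ℕ) : ℤ) ∣ r then ((n / d : ℕ) : ℂ) else 0 := by
  rcases eq_or_ne n 0 with rfl | hn
  · simp [ramanujanSum]
  set e : ℕ → ℂ := fun j => Complex.exp (2 * Real.pi * Complex.I * j * r / n)
  calc ramanujanSum n r
      = ∑ j ∈ Icc 1 n, ∑ d ∈ n.divisors, if d ∣ j then (μ d : ℂ) * e j else 0 := by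
        refine sum_congr rfl fun j _ => ?_
        rw [← sum_filter, ← sum_mul, sum_divisors_filter_dvd_moebius hn j, ite_mul, one_mul,
          zero_mul]
    _ = ∑ d ∈ n.divisors, (μ d : ℂ) * ∑ j ∈ Icc 1 n with d ∣ j, e j := by
        rw [sum_comm]
        simp_rw [sum_filter, mul_sum, mul_ite, mul_zero]
    _ = _ := by
        refine sum_congr rfl fun d hd => ?_
        rw [sum_Icc_filter_dvd, ← sum_Icc_exp_eq_ite]
        congr 2 with k
        obtain ⟨c, rfl⟩ := Nat.dvd_of_mem_divisors hd
        have hd0 : d ≠ 0 := left_ne_zero_of_mul hn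
        simp only [e, Nat.mul_div_cancel_left c (Nat.pos_of_ne_zero hd0)]
        push_cast
        field_simp

lemma Nat.div_radical_dvd_div {n d : ℕ} (hn : n ≠ 0) (hdn : d ∣ n) (hd : Squarefree d) :
    n / radical n ∣ n / d :=
  Nat.div_dvd_div_left radical_dvd_self ((dvd_radical_iff hd.isRadical hn).2 hdn)

theorem ramanujanSum_eq_zero_of_not_dvd {n : ℕ} {r : ℤ} (h : ¬((n / radical n : ℕ) : ℤ) ∣ r) :
    ramanujanSum n r = 0 := by
  rw [ramanujanSum_eq_sum_divisors]
  refine sum_eq_zero fun d hd => ?_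
  rcases eq_or_ne (μ d) 0 with hμ | hμ
  · simp [hμ]
  have hdvd := Nat.div_radical_dvd_div (Nat.ne_zero_of_mem_divisors hd)
    (Nat.dvd_of_mem_divisors hd) (moebius_ne_zero_iff_squarefree.1 hμ)
  rw [if_neg fun h' => h ((Int.natCast_dvd_natCast.2 hdvd).trans h'), mul_zero]

theorem ramanujanSum_div_radical (n : ℕ) :
    ramanujanSum n (n / radical n : ℕ) = μ (radical n) * (n / radical n : ℕ) := by
  rcases eq_or_ne n 0 with rfl | hn
  · simp [ramanujanSum]
  rw [ramanujanSum_eq_sum_divisors,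
    sum_eq_single_of_mem (radical n) (Nat.mem_divisors.2 ⟨radical_dvd_self, hn⟩), if_pos dvd_rfl]
  intro d hd hne
  rcases eq_or_ne (μ d) 0 with hμ | hμ
  · simp [hμ]
  have hdn := Nat.dvd_of_mem_divisors hd
  refine mul_eq_zero_of_right _ (if_neg fun h => hne ?_)
  have := Nat.dvd_antisymm (Int.natCast_dvd_natCast.1 h)
    (Nat.div_radical_dvd_div hn hdn (moebius_ne_zero_iff_squarefree.1 hμ))
  rw [← Nat.div_div_self hdn hn, this, Nat.div_div_self radical_dvd_self hn]

theorem ramanujanSum_natCast_sub (n : ℕ) (r : ℤ) : ramanujanSum n (n - r) = ramanujanSum n r := by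
  simp_rw [ramanujanSum_eq_sum_divisors]
  refine sum_congr rfl fun d hd => ?_
  have hdvd : ((n / d : ℕ) : ℤ) ∣ n :=
    Int.natCast_dvd_natCast.2 (Nat.div_dvd_of_dvd (Nat.dvd_of_mem_divisors hd))
  simp only [dvd_sub_right hdvd]

theorem toth_poly_degree (n : ℕ) (hn : 1 ≤ n) :
    (∀ r : ℕ, n - n / (∏ p ∈ n.primeFactors, p) < r → r ≤ n - 1 →
        ramanujanSum n r = 0) ∧
      ramanujanSum n ((n : ℤ) - (n / (∏ p ∈ n.primeFactors, p) : ℕ)) ≠ 0 := by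
  rw [← Nat.radical_eq_prod_primeFactors]
  have hm : n / radical n ∣ n := Nat.div_dvd_of_dvd radical_dvd_self
  have hm0 : 0 < n / radical n :=
    Nat.div_pos (Nat.radical_le_self_iff.2 (by omega)) (Nat.radical_pos n)
  refine ⟨fun r hlt hle => ramanujanSum_eq_zero_of_not_dvd fun hr => ?_, ?_⟩
  · -- `0 < n - r < n / γ(n)`, yet `n / γ(n)` divides both `n` and `r`
    exact Nat.not_dvd_of_pos_of_lt (by omega) (by omega)
      (Nat.dvd_sub hm (Int.natCast_dvd_natCast.1 hr))
  · rw [ramanujanSum_natCast_sub, ramanujanSum_div_radical]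
    exact mul_ne_zero (Int.cast_ne_zero.2 (moebius_ne_zero_iff_squarefree.2 squarefree_radical))
      (Nat.cast_ne_zero.2 hm0.ne')
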